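/- arXiv:2002.04702 — 5 statements merged into one kernel-verified Lean document; each statement's English description precedes it below -/
import Mathlib

section
/- Let G and H be connected finite simple graphs, where G has minimum degree d ≥ 1 and H has maximum degree Δ(H) ≥ d. Let S ⊆ V(H) be a maximum G-free subset of V(H); among all maximum G-free subsets, suppose S is chosen so that the induced subgraph H∖S has as few connected (Δ(H)−d)-regular subgraphs as possible, and subject to that, so that H[S] has the minimum possible number of connected components. If H∖S has a connected (Δ(H)−d)-regular subgraph H_0, then every vertex v ∈ V(H_0) has exactly d neighbors in S. -/
open SimpleGraph

/-- `H` contains a subgraph isomorphic to `G`, i.e. there is an injective graph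
homomorphism from `G` to `H`. -/
def HasCopy {α β : Type*} (G : SimpleGraph α) (H : SimpleGraph β) : Prop :=
  ∃ f : G →g H, Function.Injective f

/-- `S` is a `G`-free subset of the vertices of `H` of maximum cardinality. -/
def MaxFreeSubset {α V : Type*} (G : SimpleGraph α) (H : SimpleGraph V) (S : Set V) :
    Prop :=
  ¬ HasCopy G (H.induce S) ∧
    ∀ T : Set V, ¬ HasCopy G (H.induce T) → T.ncard ≤ S.ncard

/-- `H'` is a connected `r`-regular subgraph of `H ∖ S` (the subgraph of `H` induced
on the complement of `S`). -/
def IsRegConnSubgraphOff {V : Type*} (H : SimpleGraph V) (S : Set V) (r : ℕ)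
    (H' : H.Subgraph) : Prop :=
  H'.verts ⊆ Sᶜ ∧ H'.Connected ∧ ∀ v ∈ H'.verts, (H'.neighborSet v).ncard = r

/-- The number of connected `r`-regular subgraphs of `H ∖ S`. -/
noncomputable def regCount {V : Type*} (H : SimpleGraph V) (S : Set V) (r : ℕ) : ℕ :=
  {H' : H.Subgraph | IsRegConnSubgraphOff H S r H'}.ncard

/-- The number of connected components of the induced subgraph `H[S]`. -/
noncomputable def compCount {V : Type*} (H : SimpleGraph V) (S : Set V) : ℕ :=
  Nat.card (H.induce S).ConnectedComponent

/-- **Lemma (part (a)).**  Let `G`, `H` be connected, `δ(G) = d ≥ 1`, `Δ(H) ≥ d`.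
Let `S` be a maximum `G`-free subset of `V(H)`, chosen so that `H ∖ S` has as few
connected `(Δ(H) - d)`-regular subgraphs as possible and, subject to that, so that
`H[S]` has as few connected components as possible.  If `H₀` is a connected
`(Δ(H) - d)`-regular subgraph of `H ∖ S`, then every vertex of `H₀` has exactly `d`
neighbors in `S`. -/
theorem vertex_of_regular_subgraph_has_d_neighbors_in_S
    {α : Type*} [Fintype α] (G : SimpleGraph α) [DecidableRel G.Adj]
    {V : Type*} [Fintype V] (H : SimpleGraph V) [DecidableRel H.Adj]
    (hGconn : G.Connected) (hHconn : H.Connected)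
    (hd : 1 ≤ G.minDegree) (hΔd : G.minDegree ≤ H.maxDegree)
    (S : Set V) (hS : MaxFreeSubset G H S)
    (hreg : ∀ T : Set V, MaxFreeSubset G H T →
      regCount H S (H.maxDegree - G.minDegree) ≤ regCount H T (H.maxDegree - G.minDegree))
    (hcomp : ∀ T : Set V, MaxFreeSubset G H T →
      regCount H T (H.maxDegree - G.minDegree) = regCount H S (H.maxDegree - G.minDegree) →
      compCount H S ≤ compCount H T)
    (H₀ : H.Subgraph) (hH₀ : IsRegConnSubgraphOff H S (H.maxDegree - G.minDegree) H₀) :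
    ∀ v ∈ H₀.verts, (H.neighborSet v ∩ S).ncard = G.minDegree := by
  intro v hv
  obtain ⟨hsub, hconn, hregdeg⟩ := hH₀
  have hvS : v ∉ S := hsub hv
  set d := G.minDegree with hdd
  set r := H.maxDegree - d with hrr
  -- upper bound
  have hsub2 : H₀.neighborSet v ⊆ H.neighborSet v := fun w hw => hw.adj_sub
  have hdisj : Disjoint (H.neighborSet v ∩ S) (H₀.neighborSet v) := by
    rw [Set.disjoint_left]
    intro w hw hw2
    exact hsub hw2.snd_mem hw.2
  have hcardN : (H.neighborSet v).ncard = H.degree v := by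
    rw [← Nat.card_coe_set_eq, Nat.card_eq_fintype_card,
      SimpleGraph.card_neighborSet_eq_degree]
  have hunion : (H.neighborSet v ∩ S).ncard + r ≤ H.maxDegree := by
    rw [← hregdeg v hv, ← Set.ncard_union_eq hdisj (Set.toFinite _) (Set.toFinite _)]
    calc ((H.neighborSet v ∩ S) ∪ H₀.neighborSet v).ncard
        ≤ (H.neighborSet v).ncard :=
          Set.ncard_le_ncard (Set.union_subset Set.inter_subset_left hsub2)
            (Set.toFinite _)
      _ = H.degree v := hcardN
      _ ≤ H.maxDegree := H.degree_le_maxDegree v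
  have hub : (H.neighborSet v ∩ S).ncard ≤ d := by
    have := Nat.le_sub_of_add_le hunion
    rwa [hrr, Nat.sub_sub_self hΔd] at this
  -- lower bound
  rcases Nat.lt_or_ge (H.neighborSet v ∩ S).ncard d with hlt | hge
  · exfalso
    set S' : Set V := insert v S with hS'
    have hfree : ¬ HasCopy G (H.induce S') := by
      rintro ⟨f, hf⟩
      by_cases hnov : ∀ a, ((f a : V) : V) ≠ v
      · -- copy avoids v, so S contains a copy
        apply hS.1
        refine ⟨⟨fun a => ⟨(f a : V), ?_⟩, ?_⟩, ?_⟩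
        · have := (f a).2
          rcases this with h | h
          · exact absurd h (hnov a)
          · exact h
        · intro a b hab
          have := f.map_rel hab
          simpa [SimpleGraph.comap] using this
        · intro a b hab
          apply hf
          ext
          simpa using congrArg Subtype.val hab
      · push_neg at hnov
        obtain ⟨a, ha⟩ := hnov
        -- vertex a maps to v; its ≥ d neighbors map into N(v) ∩ S
        have hinj : Set.InjOn (fun b => ((f b : V) : V)) (G.neighborSet a) := by
          intro b1 _ b2 _ h
          exact hf (Subtype.ext h)
        have hmaps : ∀ b ∈ G.neighborSet a,
            ((f b : V) : V) ∈ H.neighborSet v ∩ S := by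
          intro b hb
          have hadj : (H.induce S').Adj (f a) (f b) := f.map_rel hb
          have hadj' : H.Adj (f a : V) (f b : V) := by
            simpa [SimpleGraph.comap] using hadj
          rw [ha] at hadj'
          have hne : ((f b : V) : V) ≠ v := by
            intro h
            have : f b = f a := Subtype.ext (by rw [h, ha])
            have hba : b = a := hf this
            rw [hba] at hb
            exact G.irrefl hb
          have hmem : ((f b : V) : V) ∈ S := by
            rcases (f b).2 with h | h
            · exact absurd h hne
            · exact h
          exact ⟨hadj', hmem⟩
        have hdle : d ≤ (G.neighborSet a).ncard := by
          rw [← Nat.card_coe_set_eq, Nat.card_eq_fintype_card,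
            SimpleGraph.card_neighborSet_eq_degree]
          exact G.minDegree_le_degree a
        have := Set.ncard_le_ncard_of_injOn _ hmaps hinj (Set.toFinite _)
        omega
    have hle := hS.2 S' hfree
    rw [hS', Set.ncard_insert_of_notMem hvS (Set.toFinite _)] at hle
    omega
  · omega
end

section
/- Let G and H be connected finite simple graphs, where G has minimum degree d ≥ 1 and H has maximum degree Δ(H) ≥ d. Let S ⊆ V(H) be a maximum G-free subset of V(H); among all maximum G-free subsets, suppose S is chosen so that the induced subgraph H∖S has as few connected (Δ(H)−d)-regular subgraphs as possible, and subject to that, so that H[S] has the minimum possible number of connected components. If H∖S has a connected (Δ(H)−d)-regular subgraph H_0, then for every vertex v ∈ V(H_0) the induced subgraph H[S ∪ {v}] contains exactly one copy of G (i.e., a unique subgraph isomorphic to G), and this copy is a d-regular connected component of H[S ∪ {v}]. -/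
open SimpleGraph

/-- `K` is a copy of `G` inside `H[W]`: a subgraph of `H` whose vertices lie in `W`
and which is isomorphic to `G`. -/
def IsCopyIn {α V : Type*} (G : SimpleGraph α) (H : SimpleGraph V) (W : Set V)
    (K : H.Subgraph) : Prop :=
  K.verts ⊆ W ∧ Nonempty (K.coe ≃g G)

/-!
Let `W = S ∪ {v}`. Since `S` is a maximum `G`-free set, `W` contains a copy of `G`, and every copy
meets `v`. Call the *core* the set of vertices lying in every copy of `G` in `W`. Each core vertex
`w` lies in a connected `(Δ(H) - d)`-regular subgraph of `H ∖ (W ∖ {w})`: for `w = v` this is `H₀`,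
and for `w ∈ S` the set `W ∖ {w}` is again a maximum `G`-free set, so the minimality of the number
of regular subgraphs off `S` forces one of them off `W ∖ {w}` to pass through `w`. Hence `w` has at
most `d` neighbours in `W`, while in any copy it has at least `δ(G) = d`. So every copy contains
all neighbours in `W` of its core vertices; as copies are connected and contain `v`, every copy
has vertex set the core and all `H`-edges of `W` at the core, which makes it unique, induced,
closed in `H[W]` and `d`-regular.
-/

lemma Set.nonempty_inter_of_sdiff_eq_of_ncard_le {β : Type*} [Finite β] {A B C D : Set β}
    (hdiff : A \ C = B \ D) (hcard : A.ncard ≤ B.ncard) (hA : (A ∩ C).Nonempty) :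
    (B ∩ D).Nonempty := by
  rw [← Set.ncard_pos] at hA ⊢
  have hA' := Set.ncard_inter_add_ncard_sdiff_eq_ncard A C
  have hB' := Set.ncard_inter_add_ncard_sdiff_eq_ncard B D
  rw [hdiff] at hA'
  omega

namespace SimpleGraph

lemma ncard_neighborSet_eq_degree {V : Type*} (G : SimpleGraph V) (v : V)
    [Fintype (G.neighborSet v)] : (G.neighborSet v).ncard = G.degree v := by
  rw [← Nat.card_coe_set_eq, Nat.card_eq_fintype_card, card_neighborSet_eq_degree]

end SimpleGraph

section Copies

variable {α V : Type*} {G : SimpleGraph α} {H : SimpleGraph V} {W : Set V} {K : H.Subgraph}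

lemma HasCopy.exists_isCopyIn (h : HasCopy G (H.induce W)) : ∃ K, IsCopyIn G H W K := by
  obtain ⟨f, hf⟩ := h
  let c : Copy G H := (Copy.induce H W).comp ⟨f, hf⟩
  refine ⟨c.toSubgraph, ?_, ⟨c.isoToSubgraph.symm⟩⟩
  rintro _ ⟨a, -, rfl⟩
  exact (f a).2

lemma IsCopyIn.hasCopy (hK : IsCopyIn G H W K) : HasCopy G (H.induce W) := by
  obtain ⟨hKW, ⟨e⟩⟩ := hK
  refine ⟨⟨fun a => ⟨e.symm a, hKW (e.symm a).2⟩, fun hab => K.adj_sub (e.symm.map_adj_iff.2 hab)⟩,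
    fun a b hab => e.symm.injective (Subtype.ext (congrArg Subtype.val hab :))⟩

lemma IsCopyIn.connected (hG : G.Connected) (hK : IsCopyIn G H W K) : K.Connected := by
  obtain ⟨-, ⟨e⟩⟩ := hK
  rw [Subgraph.connected_iff']
  exact hG.map e.symm.toHom e.symm.surjective

lemma IsCopyIn.minDegree_le_ncard_neighborSet [Fintype α] [DecidableRel G.Adj]
    (hK : IsCopyIn G H W K) {a : V} (ha : a ∈ K.verts) :
    G.minDegree ≤ (K.neighborSet a).ncard := by
  obtain ⟨-, ⟨e⟩⟩ := hK
  calc G.minDegree ≤ G.degree (e ⟨a, ha⟩) := G.minDegree_le_degree _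
    _ = Nat.card (G.neighborSet (e ⟨a, ha⟩)) := by
      rw [Nat.card_coe_set_eq, ncard_neighborSet_eq_degree]
    _ = Nat.card (K.coe.neighborSet ⟨a, ha⟩) := Nat.card_congr (e.mapNeighborSet _).symm
    _ = (K.neighborSet a).ncard := by
      rw [Nat.card_congr (K.coeNeighborSetEquiv _), Nat.card_coe_set_eq]

end Copies

def copyCore {α V : Type*} (G : SimpleGraph α) (H : SimpleGraph V) (W : Set V) : Set V :=
  {w | ∀ K : H.Subgraph, IsCopyIn G H W K → w ∈ K.verts}

section Core

variable {α V : Type*} [Fintype α] {G : SimpleGraph α} [DecidableRel G.Adj] [Finite V]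
  {H : SimpleGraph V} {W : Set V} {K : H.Subgraph}

lemma IsCopyIn.neighborSet_eq (hK : IsCopyIn G H W K) {a : V} (ha : a ∈ K.verts)
    (hsparse : (H.neighborSet a ∩ W).ncard ≤ G.minDegree) :
    K.neighborSet a = H.neighborSet a ∩ W :=
  Set.eq_of_subset_of_ncard_le (fun _ hx => ⟨K.adj_sub hx, hK.1 (K.edge_vert hx.symm)⟩)
    (hsparse.trans (hK.minDegree_le_ncard_neighborSet ha))

lemma IsCopyIn.ncard_neighborSet_eq (hK : IsCopyIn G H W K) {a : V} (ha : a ∈ K.verts)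
    (hsparse : (H.neighborSet a ∩ W).ncard ≤ G.minDegree) :
    (K.neighborSet a).ncard = G.minDegree :=
  ((congrArg Set.ncard (hK.neighborSet_eq ha hsparse)).trans_le hsparse).antisymm
    (hK.minDegree_le_ncard_neighborSet ha)

lemma mem_copyCore_of_adj
    (hsparse : ∀ w ∈ copyCore G H W, (H.neighborSet w ∩ W).ncard ≤ G.minDegree)
    {w x : V} (hw : w ∈ copyCore G H W) (hwx : H.Adj w x) (hx : x ∈ W) :
    x ∈ copyCore G H W := fun K hK => by
  have hxK : x ∈ K.neighborSet w := by
    rw [hK.neighborSet_eq (hw K hK) (hsparse w hw)]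
    exact ⟨hwx, hx⟩
  exact K.edge_vert hxK.symm

lemma IsCopyIn.verts_eq_copyCore (hG : G.Connected) (hK : IsCopyIn G H W K) {v : V}
    (hv : v ∈ copyCore G H W)
    (hsparse : ∀ w ∈ copyCore G H W, (H.neighborSet w ∩ W).ncard ≤ G.minDegree) :
    K.verts = copyCore G H W := by
  refine subset_antisymm (fun x hx => ?_) (fun w hw => hw K hK)
  have hwalk : ∀ {y z : K.verts}, K.coe.Walk y z → (y : V) ∈ copyCore G H W →
      (z : V) ∈ copyCore G H W := by
    intro y z p
    induction p with
    | nil => exact id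
    | cons h _ ih =>
      exact fun hy => ih (mem_copyCore_of_adj hsparse hy (K.adj_sub h) (hK.1 (by simp)))
  obtain ⟨p⟩ := (hK.connected hG).coe.preconnected ⟨v, hv K hK⟩ ⟨x, hx⟩
  exact hwalk p hv

lemma IsCopyIn.adj_iff (hK : IsCopyIn G H W K) (hKcore : K.verts = copyCore G H W)
    (hsparse : ∀ w ∈ copyCore G H W, (H.neighborSet w ∩ W).ncard ≤ G.minDegree) {a b : V} :
    K.Adj a b ↔ a ∈ copyCore G H W ∧ b ∈ W ∧ H.Adj a b := by
  refine ⟨fun h => ⟨hKcore ▸ K.edge_vert h, hK.1 (K.edge_vert h.symm), K.adj_sub h⟩, ?_⟩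
  rintro ⟨ha, hb, hab⟩
  change b ∈ K.neighborSet a
  rw [hK.neighborSet_eq (hKcore ▸ ha) (hsparse a ha)]
  exact ⟨hab, hb⟩

end Core

section RegularSubgraphs

variable {V : Type*} {H : SimpleGraph V} {r : ℕ}

lemma isRegConnSubgraphOff_insert_iff {X : Set V} {u : V} {H' : H.Subgraph} :
    IsRegConnSubgraphOff H (insert u X) r H' ↔ IsRegConnSubgraphOff H X r H' ∧ u ∉ H'.verts := by
  simp only [IsRegConnSubgraphOff, Set.subset_compl_iff_disjoint_right, Set.disjoint_insert_right]
  tauto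

lemma exists_isRegConnSubgraphOff_mem_of_regCount_le [Finite V] {X Y : Set V} {u u' : V}
    (hXY : insert u X = insert u' Y) (hle : regCount H X r ≤ regCount H Y r)
    (h : ∃ H', IsRegConnSubgraphOff H X r H' ∧ u ∈ H'.verts) :
    ∃ H', IsRegConnSubgraphOff H Y r H' ∧ u' ∈ H'.verts := by
  obtain ⟨H', hH', hu'⟩ := Set.nonempty_inter_of_sdiff_eq_of_ncard_le
    (C := {H' : H.Subgraph | u ∈ H'.verts}) (D := {H' : H.Subgraph | u' ∈ H'.verts})
    (by
      ext H'
      simp only [Set.mem_sdiff, Set.mem_ofPred_eq, ← isRegConnSubgraphOff_insert_iff, hXY])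
    hle (by obtain ⟨H', hH', hu⟩ := h; exact ⟨H', hH', hu⟩)
  exact ⟨H', hH', hu'⟩

lemma ncard_neighborSet_inter_le [Fintype V] [DecidableRel H.Adj] {d : ℕ} (hd : d ≤ H.maxDegree)
    {W : Set V} {w : V} {H' : H.Subgraph} (hH' : H'.verts ⊆ (W \ {w})ᶜ)
    (hdeg : (H'.neighborSet w).ncard = H.maxDegree - d) :
    (H.neighborSet w ∩ W).ncard ≤ d := by
  have hdisj : Disjoint (H.neighborSet w ∩ W) (H'.neighborSet w) := by
    refine Set.disjoint_left.2 fun x hx hx' => hH' (H'.edge_vert hx'.symm) ⟨hx.2, ?_⟩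
    rintro rfl
    exact H.loopless.irrefl _ hx.1
  have hunion := Set.ncard_le_ncard
    (Set.union_subset (Set.inter_subset_left (t := W)) (H'.neighborSet_subset w)) (Set.toFinite _)
  rw [Set.ncard_union_eq hdisj, ncard_neighborSet_eq_degree] at hunion
  have := H.degree_le_maxDegree w
  omega

end RegularSubgraphs

namespace MaxFreeSubset

variable {α V : Type*} {G : SimpleGraph α} {H : SimpleGraph V} {S : Set V} {v : V}

lemma hasCopy_insert [Finite V] (hS : MaxFreeSubset G H S) (hv : v ∉ S) :
    HasCopy G (H.induce (insert v S)) := by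
  by_contra hfree
  have := hS.2 _ hfree
  rw [Set.ncard_insert_of_notMem hv] at this
  omega

lemma mem_copyCore_insert (hS : MaxFreeSubset G H S) : v ∈ copyCore G H (insert v S) := by
  intro K hK
  by_contra hvK
  refine hS.1 (IsCopyIn.hasCopy ⟨fun x hx => (hK.1 hx).resolve_left ?_, hK.2⟩)
  rintro rfl
  exact hvK hx

lemma insert_sdiff_singleton_of_mem_copyCore [Finite V] (hS : MaxFreeSubset G H S) (hv : v ∉ S)
    {w : V} (hw : w ∈ copyCore G H (insert v S)) (hwS : w ∈ S) :
    MaxFreeSubset G H (insert v S \ {w}) := by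
  refine ⟨fun hcopy => ?_, fun T hT => (hS.2 T hT).trans_eq ?_⟩
  · obtain ⟨K, hK⟩ := hcopy.exists_isCopyIn
    exact (hK.1 (hw K ⟨hK.1.trans Set.sdiff_subset, hK.2⟩)).2 rfl
  · rw [Set.ncard_sdiff_singleton_of_mem (Set.mem_insert_of_mem v hwS),
      Set.ncard_insert_of_notMem hv, Nat.add_sub_cancel]

end MaxFreeSubset

theorem unique_copy_is_regular_component_general
    {α : Type*} [Fintype α] (G : SimpleGraph α) [DecidableRel G.Adj]
    {V : Type*} [Fintype V] (H : SimpleGraph V) [DecidableRel H.Adj]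
    (hGconn : G.Connected)
    (hΔd : G.minDegree ≤ H.maxDegree)
    (S : Set V) (hS : MaxFreeSubset G H S)
    (hreg : ∀ T : Set V, MaxFreeSubset G H T →
      regCount H S (H.maxDegree - G.minDegree) ≤ regCount H T (H.maxDegree - G.minDegree))
    (H₀ : H.Subgraph) (hH₀ : IsRegConnSubgraphOff H S (H.maxDegree - G.minDegree) H₀) :
    ∀ v ∈ H₀.verts, ∃ K : H.Subgraph,
      IsCopyIn G H (insert v S) K ∧
      (∀ K' : H.Subgraph, IsCopyIn G H (insert v S) K' → K' = K) ∧
      K.Connected ∧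
      K.IsInduced ∧
      (∀ a ∈ K.verts, ∀ b ∈ insert v S, H.Adj a b → b ∈ K.verts) ∧
      (∀ a ∈ K.verts, (K.neighborSet a).ncard = G.minDegree) := by
  intro v hv
  have hvS : v ∉ S := hH₀.1 hv
  obtain ⟨K, hK⟩ := (hS.hasCopy_insert hvS).exists_isCopyIn
  have hsparse : ∀ w ∈ copyCore G H (insert v S),
      (H.neighborSet w ∩ insert v S).ncard ≤ G.minDegree := by
    intro w hw
    obtain ⟨H₁, hH₁, hwH₁⟩ : ∃ H₁, IsRegConnSubgraphOff H (insert v S \ {w})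
        (H.maxDegree - G.minDegree) H₁ ∧ w ∈ H₁.verts := by
      rcases hK.1 (hw K hK) with rfl | hwS
      · exact ⟨H₀, by rwa [Set.insert_sdiff_self_of_notMem hvS], hv⟩
      · refine exists_isRegConnSubgraphOff_mem_of_regCount_le ?_
          (hreg _ (hS.insert_sdiff_singleton_of_mem_copyCore hvS hw hwS)) ⟨H₀, hH₀, hv⟩
        rw [Set.insert_sdiff_singleton, Set.insert_eq_of_mem (Set.mem_insert_of_mem v hwS)]
    exact ncard_neighborSet_inter_le hΔd hH₁.1 (hH₁.2.2 w hwH₁)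
  have hKcore := hK.verts_eq_copyCore hGconn hS.mem_copyCore_insert hsparse
  refine ⟨K, hK, fun K' hK' => ?_, hK.connected hGconn, fun {a} ha {b} hb hab => ?_,
    fun a ha b hb hab => ?_, fun a ha => ?_⟩
  · have hK'core := hK'.verts_eq_copyCore hGconn hS.mem_copyCore_insert hsparse
    refine Subgraph.ext (hK'core.trans hKcore.symm) ?_
    ext a b
    rw [hK'.adj_iff hK'core hsparse, hK.adj_iff hKcore hsparse]
  · exact (hK.adj_iff hKcore hsparse).2 ⟨hKcore ▸ ha, hK.1 hb, hab⟩
  · exact K.edge_vert ((hK.adj_iff hKcore hsparse).2 ⟨hKcore ▸ ha, hb, hab⟩).symm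
  · exact hK.ncard_neighborSet_eq ha (hsparse a (hKcore ▸ ha))

/-- **Lemma (part (b)).**  With `S` as in part (a), if `H₀` is a connected
`(Δ(H) - d)`-regular subgraph of `H ∖ S`, then for every vertex `v` of `H₀` the induced
subgraph `H[S ∪ {v}]` contains a *unique* copy of `G`, and this copy is a `d`-regular
connected component of `H[S ∪ {v}]`. -/
theorem unique_copy_is_regular_component
    {α : Type*} [Fintype α] (G : SimpleGraph α) [DecidableRel G.Adj]
    {V : Type*} [Fintype V] (H : SimpleGraph V) [DecidableRel H.Adj]
    (hGconn : G.Connected) (hHconn : H.Connected)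
    (hd : 1 ≤ G.minDegree) (hΔd : G.minDegree ≤ H.maxDegree)
    (S : Set V) (hS : MaxFreeSubset G H S)
    (hreg : ∀ T : Set V, MaxFreeSubset G H T →
      regCount H S (H.maxDegree - G.minDegree) ≤ regCount H T (H.maxDegree - G.minDegree))
    (hcomp : ∀ T : Set V, MaxFreeSubset G H T →
      regCount H T (H.maxDegree - G.minDegree) = regCount H S (H.maxDegree - G.minDegree) →
      compCount H S ≤ compCount H T)
    (H₀ : H.Subgraph) (hH₀ : IsRegConnSubgraphOff H S (H.maxDegree - G.minDegree) H₀) :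
    ∀ v ∈ H₀.verts, ∃ K : H.Subgraph,
      IsCopyIn G H (insert v S) K ∧
      (∀ K' : H.Subgraph, IsCopyIn G H (insert v S) K' → K' = K) ∧
      K.Connected ∧
      K.IsInduced ∧
      (∀ a ∈ K.verts, ∀ b ∈ insert v S, H.Adj a b → b ∈ K.verts) ∧
      (∀ a ∈ K.verts, (K.neighborSet a).ncard = G.minDegree) :=
  unique_copy_is_regular_component_general G H hGconn hΔd S hS hreg H₀ hH₀
end

section
/- Let G be a connected finite simple graph with minimum degree d ≥ 1 and let H be a finite simple graph. If S ⊆ V(H) is a maximum G-free subset of V(H), then every vertex v ∈ V(H)∖S has at least d neighbors in S; consequently, the maximum degree of the induced subgraph H∖S on V(H)∖S is at most Δ(H) − d. -/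
open SimpleGraph

/-!
If a vertex `v ∉ S` had fewer than `δ(G)` neighbours in `S`, then `S ∪ {v}` would still be
`G`-free: a copy of `G` avoiding `v` lies in `S`, and a copy through `v` would give `v` at least
`δ(G)` neighbours in `S`. This contradicts the maximality of `S`. The degree bound for `H ∖ S`
follows since the `H`-neighbours of `v ∉ S` split into those in `S` and those in `H ∖ S`.
-/

theorem hasCopy_iff_isContained {α β : Type*} {G : SimpleGraph α} {H : SimpleGraph β} :
    HasCopy G H ↔ G ⊑ H :=
  ⟨fun ⟨f, hf⟩ ↦ ⟨f.toCopy hf⟩, fun ⟨f⟩ ↦ ⟨f.toHom, f.injective⟩⟩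

namespace SimpleGraph

variable {α V : Type*} {G : SimpleGraph α} {H : SimpleGraph V}

theorem Copy.isContained_induce_of_forall_mem {s : Set V} (f : Copy G H) (hf : ∀ a, f a ∈ s) :
    G ⊑ H.induce s :=
  ⟨⟨⟨fun a ↦ ⟨f a, hf a⟩, fun hab ↦ f.toHom.map_adj hab⟩,
    fun _ _ hab ↦ f.injective (congrArg Subtype.val hab)⟩⟩

theorem degree_induce_eq_ncard_neighborSet_inter (s : Set V) (v : s)
    [Fintype ((H.induce s).neighborSet v)] :
    (H.induce s).degree v = (H.neighborSet v ∩ s).ncard := by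
  rw [← card_neighborSet_eq_degree, ← Set.toFinset_card, ← Set.ncard_eq_toFinset_card',
    ← Set.ncard_image_of_injective _ Subtype.val_injective]
  congr 1
  ext w
  simp [and_comm]

theorem degree_induce_compl_add_ncard_neighborSet_inter (s : Set V) (v : ↥sᶜ)
    [Fintype (H.neighborSet v)] [Fintype ((H.induce sᶜ).neighborSet v)] :
    (H.induce sᶜ).degree v + (H.neighborSet v ∩ s).ncard = H.degree v := by
  rw [degree_induce_eq_ncard_neighborSet_inter, ← card_neighborSet_eq_degree, ← Set.toFinset_card,
    ← Set.ncard_eq_toFinset_card', add_comm, ← Set.sdiff_eq,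
    Set.ncard_inter_add_ncard_sdiff_eq_ncard _ _ (Set.toFinite _)]

theorem free_induce_insert [Fintype α] [DecidableRel G.Adj] [Fintype V] {S : Set V} {v : V}
    (hS : G.Free (H.induce S)) (hv : (H.neighborSet v ∩ S).ncard < G.minDegree) :
    G.Free (H.induce (insert v S)) := by
  rintro ⟨f⟩
  by_cases hhit : ∃ a, (f a : V) = v
  · obtain ⟨a, ha⟩ := hhit
    classical
    have hdeg := f.degree_le a
    rw [degree_induce_eq_ncard_neighborSet_inter, ha,
      Set.inter_insert_of_notMem (notMem_neighborSet_self (G := H))] at hdeg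
    exact absurd (G.minDegree_le_degree a) (by omega)
  · push Not at hhit
    exact hS <| ((Copy.induce H _).comp f).isContained_induce_of_forall_mem
      fun a ↦ (f a).2.resolve_left (hhit a)

theorem maxDegree_induce_compl_le [Fintype V] [DecidableRel H.Adj] (s : Set V) [Fintype ↥sᶜ]
    [DecidableRel (H.induce sᶜ).Adj] {d : ℕ} (hd : ∀ v ∉ s, d ≤ (H.neighborSet v ∩ s).ncard) :
    (H.induce sᶜ).maxDegree ≤ H.maxDegree - d := by
  refine maxDegree_le_of_forall_degree_le _ _ fun v ↦ ?_
  have hsplit := degree_induce_compl_add_ncard_neighborSet_inter (H := H) s v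
  have hin := hd v v.2
  have hmax := H.degree_le_maxDegree v
  omega

end SimpleGraph

open Classical in
theorem maxDegree_off_maxFreeSubset_general
    {α : Type*} [Fintype α] (G : SimpleGraph α) [DecidableRel G.Adj]
    {V : Type*} [Fintype V] (H : SimpleGraph V) [DecidableRel H.Adj]
    (S : Set V)
    (hfree : ¬ HasCopy G (H.induce S))
    (hmax : ∀ T : Set V, ¬ HasCopy G (H.induce T) → T.ncard ≤ S.ncard) :
    (∀ v ∉ S, G.minDegree ≤ (H.neighborSet v ∩ S).ncard) ∧
    (H.induce Sᶜ).maxDegree ≤ H.maxDegree - G.minDegree := by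
  have hnbrs : ∀ v ∉ S, G.minDegree ≤ (H.neighborSet v ∩ S).ncard := by
    intro v hv
    by_contra! hlt
    have hins := hmax (insert v S) <| hasCopy_iff_isContained.not.mpr <|
      free_induce_insert (hasCopy_iff_isContained.not.mp hfree) hlt
    rw [Set.ncard_insert_of_notMem hv] at hins
    omega
  exact ⟨hnbrs, maxDegree_induce_compl_le S hnbrs⟩

open Classical in
/-- If `S` is a maximum `G`-free subset of `V(H)`, then every vertex outside `S` has at
least `δ(G)` neighbors in `S`; consequently `Δ(H ∖ S) ≤ Δ(H) - δ(G)`. -/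
theorem maxDegree_off_maxFreeSubset
    {α : Type*} [Fintype α] (G : SimpleGraph α) [DecidableRel G.Adj]
    {V : Type*} [Fintype V] (H : SimpleGraph V) [DecidableRel H.Adj]
    (hGconn : G.Connected) (hd : 1 ≤ G.minDegree)
    (S : Set V)
    (hfree : ¬ HasCopy G (H.induce S))
    (hmax : ∀ T : Set V, ¬ HasCopy G (H.induce T) → T.ncard ≤ S.ncard) :
    (∀ v ∉ S, G.minDegree ≤ (H.neighborSet v ∩ S).ncard) ∧
    (H.induce Sᶜ).maxDegree ≤ H.maxDegree - G.minDegree :=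
  maxDegree_off_maxFreeSubset_general G H S hfree hmax
end

section
/- Let H and G be finite simple graphs with chromatic numbers χ(H) and χ(G), where χ(G) ≥ 2 (i.e., G has at least one edge). Then the G-free chromatic number of H satisfies χ_G(H) ≤ ⌈χ(H)/(χ(G)−1)⌉. -/
open SimpleGraph

/-- The `G`-free chromatic number of `H`: the least `k` such that `V(H)` can be
partitioned into `k` sets each inducing a `G`-free subgraph. -/
noncomputable def gFreeChromaticNumber {α V : Type*} (G : SimpleGraph α)
    (H : SimpleGraph V) : ℕ :=
  sInf {k : ℕ | ∃ c : V → Fin k, ∀ i, ¬ HasCopy G (H.induce {v | c v = i})}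

/-- For finite graphs `H` and `G` with `χ(G) ≥ 2`, one has
`χ_G(H) ≤ ⌈χ(H) / (χ(G) - 1)⌉`. -/
theorem gFreeChromaticNumber_le_ceilDiv_chromaticNumber
    {α : Type*} [Fintype α] (G : SimpleGraph α)
    {V : Type*} [Fintype V] (H : SimpleGraph V)
    (hχG : 2 ≤ G.chromaticNumber) :
    gFreeChromaticNumber G H ≤
      H.chromaticNumber.toNat ⌈/⌉ (G.chromaticNumber.toNat - 1) := by
  set n := H.chromaticNumber.toNat with hn
  set m := G.chromaticNumber.toNat - 1 with hm
  have hGc : G.Colorable G.chromaticNumber.toNat := G.colorable_chromaticNumber_of_fintype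
  have hχG2 : 2 ≤ G.chromaticNumber.toNat := by
    have : ((2 : ℕ) : ℕ∞) ≤ G.chromaticNumber := by exact_mod_cast hχG
    exact ENat.toNat_le_toNat this (by
      simpa using (hGc.chromaticNumber_le.trans_lt (by exact_mod_cast (lt_top_iff_ne_top.2 (ENat.coe_ne_top _)) : (G.chromaticNumber.toNat : ℕ∞) < ⊤)).ne)
  have hm1 : 1 ≤ m := by omega
  set k := n ⌈/⌉ m with hk
  have hnk : n ≤ m * k := by
    simpa [smul_eq_mul] using le_smul_ceilDiv (b := n) (Nat.lt_of_lt_of_le Nat.zero_lt_one hm1)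
  clear_value n m k
  -- a proper coloring of H with n colors
  obtain ⟨c⟩ : H.Colorable n := hn ▸ H.colorable_chromaticNumber_of_fintype
  apply Nat.sInf_le
  refine ⟨fun v => ⟨(c v : ℕ) / m, ?_⟩, ?_⟩
  · have := (c v).isLt
    exact Nat.div_lt_of_lt_mul (by omega)
  · rintro i ⟨f, -⟩
    -- color the induced subgraph with m colors
    have hcol : G.Colorable m := by
      refine ⟨(SimpleGraph.Coloring.mk (fun v => (⟨(c v.1 : ℕ) % m, Nat.mod_lt _ (by omega)⟩ : Fin m)) ?_).comp f⟩
      rintro ⟨u, hu⟩ ⟨v, hv⟩ hadj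
      simp only [SimpleGraph.comap_adj, Function.Embedding.coe_subtype] at hadj
      have hne : c u ≠ c v := c.valid hadj
      have hne' : (c u : ℕ) ≠ (c v : ℕ) := fun h => hne (Fin.ext h)
      have hdiv : (c u : ℕ) / m = (c v : ℕ) / m := by
        have hu' : (⟨(c u : ℕ) / m, _⟩ : Fin k) = i := hu
        have hv' : (⟨(c v : ℕ) / m, _⟩ : Fin k) = i := hv
        have := hu'.trans hv'.symm
        exact congrArg Fin.val this
      intro h
      have hmod : (c u : ℕ) % m = (c v : ℕ) % m := by
        have h' : (⟨(c u : ℕ) % m, Nat.mod_lt _ (by omega)⟩ : Fin m) = ⟨(c v : ℕ) % m, Nat.mod_lt _ (by omega)⟩ := h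
        exact congrArg Fin.val h'
      exact hne' (by rw [← Nat.div_add_mod (c u : ℕ) m, ← Nat.div_add_mod (c v : ℕ) m, hdiv, hmod])
    have : G.chromaticNumber ≤ (m : ℕ∞) := hcol.chromaticNumber_le
    have : G.chromaticNumber.toNat ≤ m := by
      simpa using ENat.toNat_le_toNat this (by simp)
    omega
end

section
/- Let H and G be connected finite simple graphs with maximum degrees Δ(H) and Δ(G), where Δ(G) ≥ 1. Then the G-free chromatic number of H satisfies χ_G(H) ≤ ⌈(Δ(H)+1)/Δ(G)⌉. -/
open SimpleGraph

/-- For connected finite graphs `H` and `G` with `Δ(G) ≥ 1`, one has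
`χ_G(H) ≤ ⌈(Δ(H) + 1) / Δ(G)⌉`. -/
theorem gFreeChromaticNumber_le_ceilDiv_maxDegree
    {α : Type*} [Fintype α] (G : SimpleGraph α) [DecidableRel G.Adj]
    {V : Type*} [Fintype V] (H : SimpleGraph V) [DecidableRel H.Adj]
    (hGconn : G.Connected) (hHconn : H.Connected)
    (hΔG : 1 ≤ G.maxDegree) :
    gFreeChromaticNumber G H ≤ (H.maxDegree + 1) ⌈/⌉ G.maxDegree := by
  classical
  set d := G.maxDegree with hd
  set k := (H.maxDegree + 1) ⌈/⌉ d with hkdef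
  have hdpos : 0 < d := hΔG
  have hk1 : H.maxDegree + 1 ≤ d * k := by
    have := le_smul_ceilDiv (b := H.maxDegree + 1) hdpos
    simpa using this
  have hkpos : 0 < k := by
    rcases Nat.eq_zero_or_pos k with h | h
    · rw [h, Nat.mul_zero] at hk1; omega
    · exact h
  haveI : Nonempty (Fin k) := ⟨⟨0, hkpos⟩⟩
  -- the potential: number of monochromatic adjacent ordered pairs
  let F : (V → Fin k) → ℕ := fun e =>
    (Finset.univ.filter (fun p : V × V => H.Adj p.1 p.2 ∧ e p.1 = e p.2)).card
  obtain ⟨c, -, hmin⟩ := Finset.exists_min_image (Finset.univ : Finset (V → Fin k)) F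
    ⟨Classical.arbitrary _, Finset.mem_univ _⟩
  -- number of neighbors of `v` colored `t`
  let N : (V → Fin k) → V → Fin k → ℕ := fun e v t =>
    ((H.neighborFinset v).filter (fun w => e w = t)).card
  -- monochromatic adjacent pairs avoiding `v`
  let A : (V → Fin k) → V → ℕ := fun e v =>
    (Finset.univ.filter
      (fun p : V × V => H.Adj p.1 p.2 ∧ e p.1 = e p.2 ∧ p.1 ≠ v ∧ p.2 ≠ v)).card
  have hdecomp : ∀ (e : V → Fin k) (v : V), F e = A e v + N e v (e v) + N e v (e v) := by
    intro e v
    have h1 : F e =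
        (Finset.univ.filter
          (fun p : V × V => H.Adj p.1 p.2 ∧ e p.1 = e p.2 ∧ p.1 = v)).card +
        (Finset.univ.filter
          (fun p : V × V => H.Adj p.1 p.2 ∧ e p.1 = e p.2 ∧ p.1 ≠ v ∧ p.2 = v)).card +
        A e v := by
      have hs1 := Finset.card_filter_add_card_filter_not
        (s := Finset.univ.filter (fun p : V × V => H.Adj p.1 p.2 ∧ e p.1 = e p.2))
        (p := fun p : V × V => p.1 = v)
      have hs2 := Finset.card_filter_add_card_filter_not
        (s := Finset.univ.filter
          (fun p : V × V => (H.Adj p.1 p.2 ∧ e p.1 = e p.2) ∧ ¬ p.1 = v))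
        (p := fun p : V × V => p.2 = v)
      simp only [Finset.filter_filter] at hs1 hs2
      show F e = _
      rw [show F e = (Finset.univ.filter
          (fun p : V × V => H.Adj p.1 p.2 ∧ e p.1 = e p.2)).card from rfl, ← hs1, ← hs2]
      have e1 : (Finset.univ.filter
          (fun p : V × V => (H.Adj p.1 p.2 ∧ e p.1 = e p.2) ∧ p.1 = v)) =
          (Finset.univ.filter
          (fun p : V × V => H.Adj p.1 p.2 ∧ e p.1 = e p.2 ∧ p.1 = v)) := by
        apply Finset.filter_congr; intro p _; tauto
      have e2 : (Finset.univ.filter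
          (fun p : V × V => ((H.Adj p.1 p.2 ∧ e p.1 = e p.2) ∧ ¬ p.1 = v) ∧ p.2 = v)) =
          (Finset.univ.filter
          (fun p : V × V => H.Adj p.1 p.2 ∧ e p.1 = e p.2 ∧ p.1 ≠ v ∧ p.2 = v)) := by
        apply Finset.filter_congr; intro p _; tauto
      have e3 : (Finset.univ.filter
          (fun p : V × V => ((H.Adj p.1 p.2 ∧ e p.1 = e p.2) ∧ ¬ p.1 = v) ∧ ¬ p.2 = v)) =
          (Finset.univ.filter
          (fun p : V × V => H.Adj p.1 p.2 ∧ e p.1 = e p.2 ∧ p.1 ≠ v ∧ p.2 ≠ v)) := by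
        apply Finset.filter_congr; intro p _; tauto
      rw [e1, e2, e3]
      ring
    have h2 : (Finset.univ.filter
        (fun p : V × V => H.Adj p.1 p.2 ∧ e p.1 = e p.2 ∧ p.1 = v)).card = N e v (e v) := by
      have himg : (Finset.univ.filter
          (fun p : V × V => H.Adj p.1 p.2 ∧ e p.1 = e p.2 ∧ p.1 = v)) =
          ((H.neighborFinset v).filter (fun w => e w = e v)).image (fun w => (v, w)) := by
        ext ⟨a, b⟩
        simp only [Finset.mem_filter, Finset.mem_univ, true_and, Finset.mem_image,
          SimpleGraph.mem_neighborFinset, Prod.mk.injEq]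
        constructor
        · rintro ⟨hadj, heq, rfl⟩
          exact ⟨b, ⟨hadj, heq.symm⟩, rfl, rfl⟩
        · rintro ⟨w, ⟨hadj, heq⟩, rfl, rfl⟩
          exact ⟨hadj, heq.symm, rfl⟩
      rw [himg, Finset.card_image_of_injective]
      intro x y hxy
      exact (Prod.mk.injEq _ _ _ _ ▸ hxy).2
    have h3 : (Finset.univ.filter
        (fun p : V × V => H.Adj p.1 p.2 ∧ e p.1 = e p.2 ∧ p.1 ≠ v ∧ p.2 = v)).card
        = N e v (e v) := by
      have himg : (Finset.univ.filter
          (fun p : V × V => H.Adj p.1 p.2 ∧ e p.1 = e p.2 ∧ p.1 ≠ v ∧ p.2 = v)) =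
          ((H.neighborFinset v).filter (fun w => e w = e v)).image (fun w => (w, v)) := by
        ext ⟨a, b⟩
        simp only [Finset.mem_filter, Finset.mem_univ, true_and, Finset.mem_image,
          SimpleGraph.mem_neighborFinset, Prod.mk.injEq]
        constructor
        · rintro ⟨hadj, heq, hne, rfl⟩
          exact ⟨a, ⟨hadj.symm, heq⟩, rfl, rfl⟩
        · rintro ⟨w, ⟨hadj, heq⟩, rfl, rfl⟩
          exact ⟨hadj.symm, heq, (H.ne_of_adj hadj).symm, rfl⟩
      rw [himg, Finset.card_image_of_injective]
      intro x y hxy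
      exact (Prod.mk.injEq _ _ _ _ ▸ hxy).1
    rw [h1, h2, h3]; ring
  -- key claim: every vertex has at most d - 1 same-colored neighbors
  have hkey : ∀ v : V, N c v (c v) < d := by
    intro v
    by_contra hcon
    push_neg at hcon
    have hsum : ∑ t : Fin k, N c v t = H.degree v :=
      (Finset.card_eq_sum_card_fiberwise (fun w _ => Finset.mem_univ (c w))).symm
    obtain ⟨j, hj⟩ : ∃ j, N c v j < d := by
      by_contra hno
      push_neg at hno
      have h1 : d * k ≤ ∑ t : Fin k, N c v t := by
        calc d * k = ∑ _t : Fin k, d := by simp [mul_comm]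
          _ ≤ _ := Finset.sum_le_sum fun t _ => hno t
      have hdeg := H.degree_le_maxDegree v
      omega
    set c' := Function.update c v j with hc'
    have hNj : ∀ t, N c' v t = N c v t := by
      intro t
      apply Finset.card_bij (fun w _ => w) <;> intro w hw
      · simp only [Finset.mem_filter, SimpleGraph.mem_neighborFinset] at hw ⊢
        refine ⟨hw.1, ?_⟩
        rw [← hw.2, hc', Function.update_of_ne (H.ne_of_adj hw.1).symm]
      · intro w' hw' h; exact h
      · refine ⟨w, ?_, rfl⟩
        simp only [Finset.mem_filter, SimpleGraph.mem_neighborFinset] at hw ⊢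
        refine ⟨hw.1, ?_⟩
        rw [← hw.2, hc', Function.update_of_ne (H.ne_of_adj hw.1).symm]
    have hAeq : A c' v = A c v := by
      show (Finset.univ.filter _).card = (Finset.univ.filter _).card
      congr 1
      apply Finset.filter_congr
      rintro ⟨a, b⟩ -
      simp only [ne_eq]
      constructor
      · rintro ⟨h1, h2, h3, h4⟩
        rw [hc', Function.update_of_ne h3, Function.update_of_ne h4] at h2
        exact ⟨h1, h2, h3, h4⟩
      · rintro ⟨h1, h2, h3, h4⟩
        rw [hc', Function.update_of_ne h3, Function.update_of_ne h4]
        exact ⟨h1, h2, h3, h4⟩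
    have hFc' : F c' = A c v + N c v j + N c v j := by
      rw [hdecomp c' v, hAeq]
      have : c' v = j := Function.update_self v j c
      rw [this, hNj j]
    have hFc : F c = A c v + N c v (c v) + N c v (c v) := hdecomp c v
    have hlt : F c' < F c := by
      rw [hFc', hFc]
      have : N c v j < N c v (c v) := lt_of_lt_of_le hj hcon
      omega
    exact absurd (hmin c' (Finset.mem_univ _)) (not_le.2 hlt)
  -- conclude: each color class is G-free
  apply Nat.sInf_le
  refine ⟨c, ?_⟩
  rintro i ⟨f, hf⟩
  haveI : Nonempty α := hGconn.nonempty
  obtain ⟨a, ha⟩ := G.exists_maximal_degree_vertex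
  set v0 : V := (↑(f a) : V) with hv0def
  have hv0 : c v0 = i := (f a).2
  have hinj : Function.Injective (fun w : α => ((f w : {v | c v = i}) : V)) :=
    Subtype.val_injective.comp hf
  have himg : (G.neighborFinset a).image (fun w => ((f w : {v | c v = i}) : V)) ⊆
      (H.neighborFinset v0).filter (fun w => c w = c v0) := by
    intro x hx
    simp only [Finset.mem_image, SimpleGraph.mem_neighborFinset] at hx
    obtain ⟨w, hw, rfl⟩ := hx
    have hadj := f.map_adj hw
    simp only [SimpleGraph.comap_adj] at hadj
    refine Finset.mem_filter.2 ⟨SimpleGraph.mem_neighborFinset _ _ _ |>.2 hadj, ?_⟩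
    rw [hv0]
    exact (f w).2
  have hcard : d ≤ N c v0 (c v0) := by
    calc d = G.degree a := ha
      _ = (G.neighborFinset a).card := rfl
      _ = ((G.neighborFinset a).image (fun w => ((f w : {v | c v = i}) : V))).card :=
        (Finset.card_image_of_injective _ hinj).symm
      _ ≤ N c v0 (c v0) := Finset.card_le_card himg
  exact absurd hcard (not_le.2 (hkey v0))
end
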